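/- For every integer n > 0, the elements (xy)ⁿ and (yx)ⁿ of the algebra H are linearly independent over k. -/
import Mathlib


open FreeAlgebra

noncomputable section

/-- The defining relations `x²y + yx² = 2y³` and `xy² + y²x = 2x³` of the algebra `H`
(with `x = ι k 0`, `y = ι k 1`). -/
inductive HRel (k : Type*) [CommRing k] :
    FreeAlgebra k (Fin 2) → FreeAlgebra k (Fin 2) → Prop
  | rel1 : HRel k (ι k 0 * ι k 0 * ι k 1 + ι k 1 * ι k 0 * ι k 0)
      ((2 : k) • (ι k 1 * ι k 1 * ι k 1))
  | rel2 : HRel k (ι k 0 * ι k 1 * ι k 1 + ι k 1 * ι k 1 * ι k 0)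
      ((2 : k) • (ι k 0 * ι k 0 * ι k 0))

/-- The algebra `H = k⟨x,y⟩/(x²y + yx² − 2y³, −2x³ + xy² + y²x)`. -/
abbrev HAlg (k : Type*) [CommRing k] : Type _ := RingQuot (HRel k)

/-- The generator `x` of `H`. -/
def HAlg.x (k : Type*) [CommRing k] : HAlg k :=
  RingQuot.mkAlgHom k (HRel k) (ι k 0)

/-- The generator `y` of `H`. -/
def HAlg.y (k : Type*) [CommRing k] : HAlg k :=
  RingQuot.mkAlgHom k (HRel k) (ι k 1)

section aux

variable (k : Type*) [Field k] [CharZero k]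

/-- Image of `x`. -/
def MX : Matrix (Fin 2) (Fin 2) k := !![0, 1; 1, 0]

/-- Image of `y`. -/
def MY : Matrix (Fin 2) (Fin 2) k := !![0, 2; 2⁻¹, 0]

lemma MX_sq : MX k * MX k = 1 := by
  simp [MX, Matrix.mul_fin_two, Matrix.one_fin_two]

lemma MY_sq : MY k * MY k = 1 := by
  simp [MY, Matrix.mul_fin_two, Matrix.one_fin_two,
    inv_mul_cancel₀ (two_ne_zero (α := k)), mul_inv_cancel₀ (two_ne_zero (α := k))]

lemma MX_sq' (m : Matrix (Fin 2) (Fin 2) k) : MX k * (MX k * m) = m := by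
  rw [← mul_assoc, MX_sq, one_mul]

lemma MY_sq' (m : Matrix (Fin 2) (Fin 2) k) : MY k * (MY k * m) = m := by
  rw [← mul_assoc, MY_sq, one_mul]

lemma free_rel : ∀ ⦃a b⦄, HRel k a b →
    (FreeAlgebra.lift k ![MX k, MY k]) a = (FreeAlgebra.lift k ![MX k, MY k]) b := by
  intro a b h
  cases h <;>
    simp [mul_assoc, MX_sq, MY_sq, MX_sq', MY_sq', two_smul]

/-- The representation `H → M₂(k)`. -/
def rep : HAlg k →ₐ[k] Matrix (Fin 2) (Fin 2) k :=
  RingQuot.liftAlgHom k ⟨FreeAlgebra.lift k ![MX k, MY k], free_rel k⟩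

lemma rep_x : rep k (HAlg.x k) = MX k := by
  simp [rep, HAlg.x, RingQuot.liftAlgHom_mkAlgHom_apply]

lemma rep_y : rep k (HAlg.y k) = MY k := by
  simp [rep, HAlg.y, RingQuot.liftAlgHom_mkAlgHom_apply]

lemma MXY : MX k * MY k = Matrix.diagonal ![2⁻¹, 2] := by
  simp [MX, MY, Matrix.mul_fin_two]
  ext i j
  fin_cases i <;> fin_cases j <;> simp [Matrix.diagonal]

lemma MYX : MY k * MX k = Matrix.diagonal ![2, 2⁻¹] := by
  simp [MX, MY, Matrix.mul_fin_two]
  ext i j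
  fin_cases i <;> fin_cases j <;> simp [Matrix.diagonal]

end aux

/-- for every `n > 0`, the elements `(xy)ⁿ` and `(yx)ⁿ` of `H` are
linearly independent over `k`. -/
theorem HAlg_xy_yx_linearIndependent (k : Type*) [Field k] [IsAlgClosed k] [CharZero k]
    (n : ℕ) (hn : 0 < n) :
    LinearIndependent k ![(HAlg.x k * HAlg.y k) ^ n, (HAlg.y k * HAlg.x k) ^ n] := by
  apply LinearIndependent.of_comp (rep k).toLinearMap
  have hxy : (rep k).toLinearMap ∘ ![(HAlg.x k * HAlg.y k) ^ n, (HAlg.y k * HAlg.x k) ^ n]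
      = ![(Matrix.diagonal ![(2:k)⁻¹, 2]) ^ n, (Matrix.diagonal ![(2:k), 2⁻¹]) ^ n] := by
    funext i
    fin_cases i <;>
      simp [map_pow, map_mul, rep_x, rep_y, MXY, MYX]
  rw [hxy]
  rw [LinearIndependent.pair_iff]
  intro s t hst
  have h00 := congrFun (congrFun hst 0) 0
  have h11 := congrFun (congrFun hst 1) 1
  simp [Matrix.diagonal_pow, Matrix.diagonal_apply_eq, Pi.pow_apply] at h00 h11
  have h2 : (2 : k) ≠ 0 := two_ne_zero
  set c : k := (2:k) ^ n with hc
  have hcne : c ≠ 0 := pow_ne_zero _ h2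
  -- h00 : s * c⁻¹ + t * c = 0, h11 : s * c + t * c⁻¹ = 0
  have e1 : s + t * c ^ 2 = 0 := by
    have := congrArg (· * c) h00
    field_simp at this ⊢
    linear_combination this
  have e2 : s * c ^ 2 + t = 0 := by
    have := congrArg (· * c) h11
    field_simp at this ⊢
    linear_combination this
  have hc4 : c ^ 4 ≠ 1 := by
    rw [hc, ← pow_mul]
    intro h
    have : ((2 ^ (n * 4) : ℕ) : k) = ((1 : ℕ) : k) := by push_cast; simpa using h
    have := Nat.cast_injective (R := k) this
    have hge : 2 ^ (n * 4) ≥ 2 ^ 4 := Nat.pow_le_pow_right (by norm_num) (by omega)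
    omega
  have ht : t = 0 := by
    have : t * (1 - c ^ 4) = 0 := by linear_combination e2 - c^2 * e1
    rcases mul_eq_zero.mp this with h | h
    · exact h
    · exact absurd (by linear_combination -h) hc4
  constructor
  · have := e1; rw [ht] at this; simpa using this
  · exact ht

end
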